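/- arXiv:1608.02022 — 3 statements merged into one kernel-verified Lean document; each statement's English description precedes it below -/
import Mathlib

section
/- Let m be a positive integer divisible by 4. Then every integer N ≥ 28m³ can be written as N = p_{m+2}(x₁) + p_{m+2}(x₂) + p_{m+2}(x₃) + p_{m+2}(x₄) for some nonnegative integers x₁, x₂, x₃, x₄. -/
/-- Polygonal number of order `m+2`: `p_{m+2}(n) = (m·n² − (m−2)·n)/2 = m·n(n−1)/2 + n`. -/
def polygonal (m n : ℕ) : ℕ := m * (n * (n - 1)) / 2 + n


/-! ### Binary and ternary quadratic form reduction over ℤ -/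

-- Q2 a b c x y = a x² + 2b xy + c y²
-- Q3 a b c d e f x y z = a x² + b y² + c z² + 2d xy + 2e xz + 2f yz

private lemma choose_shift (a t : ℤ) (ha : 0 < a) : ∃ x : ℤ, (2*(a*x + t))^2 ≤ a^2 := by
  rcases le_or_gt (2*(t % a)) a with h | h
  · refine ⟨-(t/a), ?_⟩
    have h0 : a * -(t/a) + t = t % a := by rw [Int.emod_def]; ring
    have h1 : 0 ≤ t % a := Int.emod_nonneg t (by positivity)
    rw [h0]; nlinarith
  · refine ⟨-(t/a) - 1, ?_⟩
    have h0 : a * (-(t/a) - 1) + t = t % a - a := by rw [Int.emod_def]; ring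
    have h1 : t % a < a := Int.emod_lt_of_pos t ha
    rw [h0]; nlinarith

/-- Binary reduction: find a small positive primitively-represented value. -/
private lemma R2min : ∀ (n : ℕ) (a b c : ℤ), a.toNat ≤ n → 0 < a → 0 < a*c - b^2 →
    ∃ p q r s : ℤ, p*s - q*r = 1 ∧ 0 < a*p^2 + 2*b*p*r + c*r^2 ∧
      3*(a*p^2 + 2*b*p*r + c*r^2)^2 ≤ 4*(a*c - b^2) := by
  intro n
  induction n with
  | zero => intro a b c h ha _; omega
  | succ n IH =>
    intro a b c hn ha hD
    obtain ⟨x₁, hx₁⟩ := choose_shift a b ha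
    set val := a*x₁^2 + 2*b*x₁ + c with hval
    have key : a * val = (a*x₁ + b)^2 + (a*c - b^2) := by rw [hval]; ring
    have hvpos : 0 < val := by nlinarith
    rcases lt_or_ge val a with hlt | hge
    · -- recurse on transformed form (val, -a*x₁-b, a)
      have hdet' : 0 < val * a - (-(a*x₁)-b)^2 := by nlinarith [sq_nonneg (a*x₁+b)]
      obtain ⟨p', q', r', s', hd', hp', hb'⟩ := IH val (-(a*x₁)-b) a (by omega) hvpos hdet'
      refine ⟨x₁*p' - r', x₁*q' - s', p', q', ?_, ?_, ?_⟩
      · linear_combination hd'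
      · have : a*(x₁*p' - r')^2 + 2*b*(x₁*p'-r')*p' + c*p'^2
            = val*p'^2 + 2*(-(a*x₁)-b)*p'*r' + a*r'^2 := by rw [hval]; ring
        rw [this]; exact hp'
      · have : a*(x₁*p' - r')^2 + 2*b*(x₁*p'-r')*p' + c*p'^2
            = val*p'^2 + 2*(-(a*x₁)-b)*p'*r' + a*r'^2 := by rw [hval]; ring
        rw [this]
        calc 3*(val*p'^2 + 2*(-(a*x₁)-b)*p'*r' + a*r'^2)^2 ≤ 4*(val*a - (-(a*x₁)-b)^2) := hb'
        _ = 4*(a*c - b^2) := by linear_combination 4*key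
    · -- a is already small: 3a² ≤ 4D
      refine ⟨1, 0, 0, 1, by ring, by simpa using ha, ?_⟩
      have h1 : a^2 ≤ a * val := by nlinarith
      have : 3*a^2 ≤ 4*(a*c-b^2) := by nlinarith
      nlinarith

/-- Binary det-1 positive forms are sums of two squares of linear forms. -/
private lemma R2I : ∀ (n : ℕ) (a b c : ℤ), a.toNat ≤ n → 0 < a → a*c - b^2 = 1 →
    ∃ p q r s : ℤ, ∀ x y : ℤ, a*x^2 + 2*b*x*y + c*y^2 = (p*x+q*y)^2 + (r*x+s*y)^2 := by
  intro n
  induction n with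
  | zero => intro a b c h ha _; omega
  | succ n IH =>
    intro a b c hn ha hD
    rcases eq_or_lt_of_le (by omega : (1:ℤ) ≤ a) with h1 | h1
    · have ha1 : a = 1 := h1.symm
      subst ha1
      have hc : c = 1 + b^2 := by linarith
      subst hc
      exact ⟨1, b, 0, 1, fun x y => by ring⟩
    · obtain ⟨x₁, hx₁⟩ := choose_shift a b ha
      set val := a*x₁^2 + 2*b*x₁ + c with hval
      have key : a * val = (a*x₁ + b)^2 + 1 := by rw [hval]; linear_combination hD
      have hvpos : 0 < val := by nlinarith
      have hlt : val < a := by nlinarith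
      have hdet' : val * a - (-(a*x₁)-b)^2 = 1 := by nlinarith
      obtain ⟨p', q', r', s', hQ⟩ := IH val (-(a*x₁)-b) a (by omega) hvpos hdet'
      refine ⟨-q', p' + q'*x₁, -s', r' + s'*x₁, fun x y => ?_⟩
      have h2 := hQ y (x₁*y - x)
      calc a*x^2 + 2*b*x*y + c*y^2
          = val*y^2 + 2*(-(a*x₁)-b)*y*(x₁*y-x) + a*(x₁*y-x)^2 := by rw [hval]; ring
        _ = (p'*y + q'*(x₁*y-x))^2 + (r'*y + s'*(x₁*y-x))^2 := h2
        _ = ((-q')*x + (p'+q'*x₁)*y)^2 + ((-s')*x + (r'+s'*x₁)*y)^2 := by ring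
set_option maxHeartbeats 1600000 in
/-- Ternary det-1 positive forms are sums of three squares of linear forms. -/
private lemma R3SOS : ∀ (n : ℕ) (a b c d e f : ℤ), a.toNat ≤ n → 0 < a →
    (∀ x y z : ℤ, ¬(x = 0 ∧ y = 0 ∧ z = 0) →
      0 < a*x^2 + b*y^2 + c*z^2 + 2*(d*x*y) + 2*(e*x*z) + 2*(f*y*z)) →
    a*b*c + 2*(d*e*f) - a*f^2 - b*e^2 - c*d^2 = 1 →
    ∃ u1 u2 u3 v1 v2 v3 w1 w2 w3 : ℤ, ∀ x y z : ℤ,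
      a*x^2 + b*y^2 + c*z^2 + 2*(d*x*y) + 2*(e*x*z) + 2*(f*y*z)
        = (u1*x+u2*y+u3*z)^2 + (v1*x+v2*y+v3*z)^2 + (w1*x+w2*y+w3*z)^2 := by
  intro n
  induction n with
  | zero => intro a b c d e f h ha _ _; omega
  | succ n IH =>
    intro a b c d e f hn ha hpd hdet
    set C1 := a*b - d^2 with hC1
    set C2 := a*f - d*e with hC2
    set C3 := a*c - e^2 with hC3
    have hdet2 : C1*C3 - C2^2 = a := by
      have : C1*C3 - C2^2 = a*(a*b*c + 2*(d*e*f) - a*f^2 - b*e^2 - c*d^2) := by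
        rw [hC1, hC2, hC3]; ring
      rw [this, hdet, mul_one]
    have hC1pos : 0 < C1 := by
      have hq := hpd (-d) a 0 (by intro h; exact absurd h.2.1 (by omega))
      have h2 : a * (a*(-d)^2 + b*a^2 + c*0^2 + 2*(d*(-d)*a) + 2*(e*(-d)*0) + 2*(f*a*0))
          = C1 * a^2 := by rw [hC1]; ring
      nlinarith
    obtain ⟨p, q, r, s, hdpq, hQ2pos, h3Q⟩ :=
      R2min C1.toNat C1 C2 C3 le_rfl hC1pos (by rw [hdet2]; exact ha)
    set Q2val := C1*p^2 + 2*C2*p*r + C3*r^2 with hQ2val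
    obtain ⟨x₁, hx₁⟩ := choose_shift a (d*p + e*r) ha
    set val := a*x₁^2 + b*p^2 + c*r^2 + 2*(d*x₁*p) + 2*(e*x₁*r) + 2*(f*p*r) with hval
    have key : a * val = (a*x₁ + (d*p + e*r))^2 + Q2val := by
      rw [hval, hQ2val, hC1, hC2, hC3]; ring
    have hpr : ¬(x₁ = 0 ∧ p = 0 ∧ r = 0) := by
      rintro ⟨-, hp0, hr0⟩; rw [hp0, hr0] at hdpq; omega
    have hvalpos : 0 < val := hpd x₁ p r hpr
    rcases lt_or_ge val a with hlt | hge
    · -- descent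
      set b' := b*q^2 + c*s^2 + 2*(f*q*s) with hb'
      set d' := b*p*q + c*r*s + d*(x₁*q) + e*(x₁*s) + f*(p*s + q*r) with hd'
      set e' := a*x₁ + d*p + e*r with he'
      set f' := d*q + e*s with hf'
      have htr : ∀ X Y Z : ℤ, val*X^2 + b'*Y^2 + a*Z^2 + 2*(d'*X*Y) + 2*(e'*X*Z) + 2*(f'*Y*Z)
          = a*(x₁*X + Z)^2 + b*(p*X + q*Y)^2 + c*(r*X + s*Y)^2
            + 2*(d*(x₁*X + Z)*(p*X + q*Y)) + 2*(e*(x₁*X + Z)*(r*X + s*Y))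
            + 2*(f*(p*X + q*Y)*(r*X + s*Y)) := by
        intro X Y Z; rw [hval, hb', hd', he', hf']; ring
      have hdet3' : val*b'*a + 2*(d'*e'*f') - val*f'^2 - b'*e'^2 - a*d'^2 = 1 := by
        have hid : val*b'*a + 2*(d'*e'*f') - val*f'^2 - b'*e'^2 - a*d'^2
            = (p*s - q*r)^2 * (a*b*c + 2*(d*e*f) - a*f^2 - b*e^2 - c*d^2) := by
          rw [hval, hb', hd', he', hf']; ring
        rw [hid, hdpq, hdet]; ring
      have hpd' : ∀ X Y Z : ℤ, ¬(X = 0 ∧ Y = 0 ∧ Z = 0) →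
          0 < val*X^2 + b'*Y^2 + a*Z^2 + 2*(d'*X*Y) + 2*(e'*X*Z) + 2*(f'*Y*Z) := by
        intro X Y Z hXYZ
        rw [htr]
        refine hpd _ _ _ ?_
        rintro ⟨h1, h2, h3⟩
        refine hXYZ ⟨?_, ?_, ?_⟩
        · linear_combination s*h2 - q*h3 - X*hdpq
        · linear_combination p*h3 - r*h2 - Y*hdpq
        · linear_combination h1 - x₁*s*h2 + x₁*q*h3 + x₁*X*hdpq
      obtain ⟨u1, u2, u3, v1, v2, v3, w1, w2, w3, hSOS⟩ :=
        IH val b' a d' e' f' (by omega) hvalpos hpd' hdet3'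
      refine ⟨u3, u1*s - u2*r - u3*x₁*s, -(u1*q) + u2*p + u3*x₁*q,
             v3, v1*s - v2*r - v3*x₁*s, -(v1*q) + v2*p + v3*x₁*q,
             w3, w1*s - w2*r - w3*x₁*s, -(w1*q) + w2*p + w3*x₁*q, fun x y z => ?_⟩
      have h1 := htr (s*y - q*z) (-(r*y) + p*z) (x - x₁*s*y + x₁*q*z)
      have h2 := hSOS (s*y - q*z) (-(r*y) + p*z) (x - x₁*s*y + x₁*q*z)
      have harg1 : x₁*(s*y - q*z) + (x - x₁*s*y + x₁*q*z) = x := by ring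
      have harg2 : p*(s*y - q*z) + q*(-(r*y) + p*z) = y := by linear_combination y*hdpq
      have harg3 : r*(s*y - q*z) + s*(-(r*y) + p*z) = z := by linear_combination z*hdpq
      rw [harg1, harg2, harg3] at h1
      rw [← h1, h2]; ring
    · -- val ≥ a forces a = 1
      have h3a : 3*a^2 ≤ 4*Q2val := by nlinarith
      have ha1 : a = 1 := by nlinarith [hdet2, hQ2pos]
      subst ha1
      obtain ⟨p', q', r', s', hQ2⟩ := R2I C1.toNat C1 C2 C3 le_rfl hC1pos (by
        rw [hdet2])
      refine ⟨1, d, e, 0, p', q', 0, r', s', fun x y z => ?_⟩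
      have h2 := hQ2 y z
      rw [hC1, hC2, hC3] at h2
      nlinarith [h2]
open scoped NumberTheorySymbols

private lemma threeSq_core (n a b g w : ℤ) (hn : 0 < n) (ha : 0 < a)
    (hg : a * g = b^2 + n) (hw : n * w = a + 1) :
    ∃ x y z : ℤ, x^2 + y^2 + z^2 = n := by
  -- positivity of the form A = [[a,b,0],[b,g,1],[0,1,w]]
  have hApd : ∀ x y z : ℤ, ¬(x = 0 ∧ y = 0 ∧ z = 0) →
      0 < a*x^2 + g*y^2 + w*z^2 + 2*(b*x*y) + 2*(0*x*z) + 2*(1*y*z) := by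
    intro x y z hxyz
    have hid : (a*n) * (a*x^2 + g*y^2 + w*z^2 + 2*(b*x*y) + 2*(0*x*z) + 2*(1*y*z))
        = n*(a*x + b*y)^2 + (n*y + a*z)^2 + a*z^2 := by
      linear_combination (n*y^2)*hg + (a*z^2)*hw
    have han : 0 < a*n := by positivity
    rcases eq_or_ne z 0 with hz | hz
    · rcases eq_or_ne y 0 with hy | hy
      · have hx : x ≠ 0 := fun h => hxyz ⟨h, hy, hz⟩
        have h7 : a*x + b*y ≠ 0 := by rw [hy]; simpa using mul_ne_zero (ne_of_gt ha) hx
        have h6 : 0 < (a*x + b*y)*(a*x + b*y) := mul_self_pos.mpr h7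
        nlinarith [sq_nonneg (n*y + a*z), sq_nonneg z, mul_pos hn h6]
      · have h7 : n*y + a*z ≠ 0 := by rw [hz]; simpa using mul_ne_zero (ne_of_gt hn) hy
        have h6 : 0 < (n*y + a*z)*(n*y + a*z) := mul_self_pos.mpr h7
        nlinarith [sq_nonneg (a*x + b*y), sq_nonneg z, h6, hn]
    · have h6 : 0 < z*z := mul_self_pos.mpr hz
      nlinarith [sq_nonneg (a*x + b*y), sq_nonneg (n*y + a*z), hn, mul_pos ha h6]
  -- B = adjugate of A
  set A1 := g*w - 1 with hA1
  set A2 := a*w with hA2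
  set D2 := -(b*w) with hD2
  set E2 := b with hE2
  set F2 := -a with hF2
  have hBpd : ∀ x y z : ℤ, ¬(x = 0 ∧ y = 0 ∧ z = 0) →
      0 < A1*x^2 + A2*y^2 + n*z^2 + 2*(D2*x*y) + 2*(E2*x*z) + 2*(F2*y*z) := by
    intro x y z hxyz
    set u1 := (g*w-1)*x - b*w*y + b*z with hu1
    set u2 := -(b*w)*x + a*w*y - a*z with hu2
    set u3 := b*x - a*y + n*z with hu3
    have comp1 : a*u1 + b*u2 + 0*u3 = x := by
      rw [hu1, hu2, hu3]; linear_combination (x*w)*hg + x*hw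
    have comp2 : b*u1 + g*u2 + 1*u3 = y := by
      rw [hu1, hu2, hu3]; linear_combination (y*w - z)*hg + y*hw
    have comp3 : 0*u1 + 1*u2 + w*u3 = z := by
      rw [hu1, hu2, hu3]; linear_combination z*hw
    have hQB : A1*x^2 + A2*y^2 + n*z^2 + 2*(D2*x*y) + 2*(E2*x*z) + 2*(F2*y*z)
        = x*u1 + y*u2 + z*u3 := by
      rw [hA1, hA2, hD2, hE2, hF2, hu1, hu2, hu3]; ring
    have hQA : a*u1^2 + g*u2^2 + w*u3^2 + 2*(b*u1*u2) + 2*(0*u1*u3) + 2*(1*u2*u3)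
        = u1*(a*u1 + b*u2 + 0*u3) + u2*(b*u1 + g*u2 + 1*u3) + u3*(0*u1 + 1*u2 + w*u3) := by
      ring
    rw [comp1, comp2, comp3] at hQA
    have hune : ¬(u1 = 0 ∧ u2 = 0 ∧ u3 = 0) := by
      rintro ⟨h1, h2, h3⟩
      refine hxyz ⟨?_, ?_, ?_⟩
      · rw [← comp1, h1, h2, h3]; ring
      · rw [← comp2, h1, h2, h3]; ring
      · rw [← comp3, h1, h2, h3]; ring
    have := hApd u1 u2 u3 hune
    rw [hQA] at this
    rw [hQB]
    nlinarith [this]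
  have hA1pos : 0 < A1 := by
    have := hBpd 1 0 0 (by intro h; exact one_ne_zero h.1)
    nlinarith [this]
  have hdetB : A1*A2*n + 2*(D2*E2*F2) - A1*F2^2 - A2*E2^2 - n*D2^2 = 1 := by
    have hid : A1*A2*n + 2*(D2*E2*F2) - A1*F2^2 - A2*E2^2 - n*D2^2
        = (a*g*w - a - w*b^2)^2 := by
      rw [hA1, hA2, hD2, hE2, hF2]
      linear_combination (b^2*w^2 + a*w - a*g*w^2) * hg
    have h2 : a*g*w - a - w*b^2 = 1 := by linear_combination w*hg + hw
    rw [hid, h2]; ring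
  obtain ⟨u1, u2, u3, v1, v2, v3, w1, w2, w3, hSOS⟩ :=
    R3SOS A1.toNat A1 A2 n D2 E2 F2 le_rfl hA1pos hBpd hdetB
  have h001 := hSOS 0 0 1
  refine ⟨u3, v3, w3, ?_⟩
  have hL : A1*(0:ℤ)^2 + A2*(0:ℤ)^2 + n*(1:ℤ)^2 + 2*(D2*0*0) + 2*(E2*0*1) + 2*(F2*0*1) = n := by ring
  rw [hL] at h001
  rw [h001]; ring
private lemma coprime_of_modeq {a b M : ℕ} (h : a ≡ b [MOD M]) (hc : Nat.Coprime b M) :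
    Nat.Coprime a M := by
  have hg : Nat.gcd a M = Nat.gcd b M := by
    conv_lhs => rw [Nat.gcd_comm, Nat.gcd_rec]
    conv_rhs => rw [Nat.gcd_comm, Nat.gcd_rec]
    rw [h]
  unfold Nat.Coprime at *
  rw [hg]; exact hc

private lemma get_prime (M r : ℕ) (hM : 0 < M) (hco : Nat.Coprime r M) (K : ℕ) :
    ∃ q : ℕ, q.Prime ∧ K < q ∧ q ≡ r [MOD M] := by
  haveI : NeZero M := ⟨hM.ne'⟩
  have hu : IsUnit ((r : ℕ) : ZMod M) := (ZMod.isUnit_iff_coprime r M).mpr hco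
  obtain ⟨q, hq1, hq2, hq3⟩ := Nat.forall_exists_prime_gt_and_eq_mod hu K
  exact ⟨q, hq2, hq1, (ZMod.natCast_eq_natCast_iff q r M).mp hq3⟩

private lemma get_sqrt (q n : ℕ) (hq : q.Prime) (hJ : J(-(n:ℤ) | q) = 1) :
    ∃ b : ℕ, q ∣ b^2 + n := by
  haveI : Fact q.Prime := ⟨hq⟩
  haveI : NeZero q := ⟨hq.pos.ne'⟩
  have hsq : IsSquare ((-(n:ℤ) : ℤ) : ZMod q) := ZMod.isSquare_of_jacobiSym_eq_one hJ
  obtain ⟨t, ht⟩ := hsq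
  refine ⟨t.val, ?_⟩
  have h1 : ((t.val^2 + n : ℕ) : ZMod q) = 0 := by
    push_cast
    rw [ZMod.natCast_rightInverse t]
    have h2 : ((-(n:ℤ) : ℤ) : ZMod q) = -(n : ZMod q) := by push_cast; ring
    rw [h2] at ht
    rw [sq]; rw [← ht]; ring
  exact (ZMod.natCast_eq_zero_iff _ _).mp h1

private lemma modeq_mod_eq {a b M : ℕ} (h : a ≡ b [MOD M]) : a % M = b % M := h

private lemma jacobi_mod_nat {a b : ℕ} {n : ℕ} (h : a ≡ b [MOD n]) :
    J((a:ℤ) | n) = J((b:ℤ) | n) := by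
  apply jacobiSym.mod_left'
  have := modeq_mod_eq h
  exact_mod_cast congrArg (fun x : ℕ => (x : ℤ)) this

/-- Three squares for `n ≡ 3 (mod 8)`. -/
private lemma threeSq3mod8 (n : ℕ) (h8 : n % 8 = 3) : ∃ x y z : ℤ, x^2+y^2+z^2 = (n:ℤ) := by
  have hn : 0 < n := by omega
  have hodd : n % 2 = 1 := by omega
  have hoddn : Odd n := Nat.odd_iff.mpr hodd
  set t := (n-1)/2 with ht
  have h2t : 2*t + 1 = n := by omega
  have hco4 : Nat.Coprime 4 n := by
    have h2 : Nat.Coprime 2 n := Nat.coprime_two_left.mpr hoddn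
    have := h2.mul h2; simpa using this
  have hcotn : Nat.Coprime t n := by
    have hd := Nat.gcd_dvd_left t n
    have hd2 := Nat.gcd_dvd_right t n
    have h3 : Nat.gcd t n ∣ 1 := by
      have h4 : Nat.gcd t n ∣ 2*t := hd.mul_left 2
      have h5 := Nat.dvd_sub hd2 h4
      simpa [show n - 2*t = 1 by omega] using h5
    exact Nat.dvd_one.mp h3
  set r := (Nat.chineseRemainder hco4 1 t : ℕ) with hr
  have hr4 : r ≡ 1 [MOD 4] := (Nat.chineseRemainder hco4 1 t).2.1
  have hrn : r ≡ t [MOD n] := (Nat.chineseRemainder hco4 1 t).2.2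
  have hcor : Nat.Coprime r (4*n) :=
    Nat.Coprime.mul_right (coprime_of_modeq hr4 (by norm_num)) (coprime_of_modeq hrn hcotn)
  obtain ⟨q, hqp, hqgt, hqmod⟩ := get_prime (4*n) r (by positivity) hcor (4*n + 4)
  have hq4 : q % 4 = 1 := by
    have h1 : q ≡ r [MOD 4] := hqmod.of_dvd ⟨n, rfl⟩
    have h2 := modeq_mod_eq (h1.trans hr4)
    omega
  have hqodd : q % 2 = 1 := by omega
  have hoddq : Odd q := Nat.odd_iff.mpr hqodd
  have hqt : q ≡ t [MOD n] := (hqmod.of_dvd ⟨4, by ring⟩).trans hrn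
  have hJn : J((n:ℤ) | q) = 1 := by
    have hrec : J((q:ℤ) | n) = J((n:ℤ) | q) :=
      jacobiSym.quadratic_reciprocity_one_mod_four hq4 hoddn
    have h1 : J((q:ℤ) | n) = J((t:ℤ) | n) := jacobi_mod_nat hqt
    have h2 : J((-2 : ℤ)*t | n) = 1 := by
      have harg : ((-2 : ℤ)*t) % n = 1 % n := by
        have hx : (-2 : ℤ)*t = 1 + (n:ℤ)*(-1) := by
          have : (2*t + 1 : ℤ) = n := by exact_mod_cast congrArg (fun x : ℕ => (x:ℤ)) h2t
          linarith
        rw [hx, Int.add_mul_emod_self_left]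
      rw [jacobiSym.mod_left' harg, jacobiSym.one_left]
    have h3 : J((-2:ℤ) | n) = 1 := by
      rw [show (-2 : ℤ) = -1 * 2 by ring, jacobiSym.mul_left,
        jacobiSym.at_neg_one hoddn, jacobiSym.at_two hoddn,
        ZMod.χ₄_nat_eq_if_mod_four, ZMod.χ₈_nat_eq_if_mod_eight]
      have h4 : n % 4 = 3 := by omega
      rw [if_neg (by omega), if_neg (by omega), if_neg (by omega), if_neg (by omega)]
      ring
    rw [jacobiSym.mul_left, h3, one_mul] at h2
    rw [← hrec, h1, h2]
  have hJ : J(-(n:ℤ) | q) = 1 := by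
    have hneg1 : J((-1:ℤ) | q) = 1 := by
      rw [jacobiSym.at_neg_one hoddq, ZMod.χ₄_nat_eq_if_mod_four,
        if_neg (by omega), if_pos hq4]
    rw [show -(n:ℤ) = -1 * n by ring, jacobiSym.mul_left, hneg1, hJn]; ring
  obtain ⟨b₀, hb₀⟩ := get_sqrt q n hqp hJ
  set bb := if b₀ % 2 = 1 then b₀ else b₀ + q with hbb
  have hbbodd : bb % 2 = 1 := by rw [hbb]; split <;> omega
  have hbbdvd : q ∣ bb^2 + n := by
    rw [hbb]; split
    · exact hb₀
    · have he : (b₀ + q)^2 + n = (b₀^2 + n) + q*(2*b₀ + q) := by ring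
      rw [he]; exact Nat.dvd_add hb₀ ⟨2*b₀+q, rfl⟩
  have h2dvd : 2 ∣ bb^2 + n := by
    have hb2 : bb^2 % 2 = 1 := by rw [Nat.pow_mod, hbbodd]
    omega
  have h2q : 2*q ∣ bb^2 + n := by
    have hco2q : Nat.Coprime 2 q := Nat.coprime_two_left.mpr hoddq
    exact Nat.Coprime.mul_dvd_of_dvd_of_dvd hco2q h2dvd hbbdvd
  obtain ⟨g, hgg⟩ := h2q
  have hnw : n ∣ 2*q + 1 := by
    have h1 : (2*q+1) ≡ (2*t+1) [MOD n] := (hqt.mul_left 2).add_right 1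
    have h2 := modeq_mod_eq h1
    rw [h2t, Nat.mod_self] at h2
    exact Nat.dvd_of_mod_eq_zero h2
  obtain ⟨w, hww⟩ := hnw
  obtain ⟨x, y, z, hxyz⟩ := threeSq_core (n:ℤ) (2*q) (bb:ℤ) (g:ℤ) (w:ℤ)
    (by exact_mod_cast hn) (by exact_mod_cast Nat.mul_pos two_pos hqp.pos)
    (by exact_mod_cast hgg.symm) (by exact_mod_cast hww.symm)
  exact ⟨x, y, z, hxyz⟩

/-- Three squares for `n ≡ 1 (mod 4)`. -/
private lemma threeSq1mod4 (n : ℕ) (h4 : n % 4 = 1) : ∃ x y z : ℤ, x^2+y^2+z^2 = (n:ℤ) := by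
  have hn : 0 < n := by omega
  have hodd : n % 2 = 1 := by omega
  have hoddn : Odd n := Nat.odd_iff.mpr hodd
  have hco4 : Nat.Coprime 4 n := by
    have h2 : Nat.Coprime 2 n := Nat.coprime_two_left.mpr hoddn
    have := h2.mul h2; simpa using this
  have hcotn : Nat.Coprime (n-1) n := by
    have hd := Nat.gcd_dvd_left (n-1) n
    have hd2 := Nat.gcd_dvd_right (n-1) n
    have h3 : Nat.gcd (n-1) n ∣ 1 := by
      have h5 := Nat.dvd_sub hd2 hd
      simpa [show n - (n-1) = 1 by omega] using h5
    exact Nat.dvd_one.mp h3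
  set r := (Nat.chineseRemainder hco4 1 (n-1) : ℕ) with hr
  have hr4 : r ≡ 1 [MOD 4] := (Nat.chineseRemainder hco4 1 (n-1)).2.1
  have hrn : r ≡ (n-1) [MOD n] := (Nat.chineseRemainder hco4 1 (n-1)).2.2
  have hcor : Nat.Coprime r (4*n) :=
    Nat.Coprime.mul_right (coprime_of_modeq hr4 (by norm_num)) (coprime_of_modeq hrn hcotn)
  obtain ⟨q, hqp, hqgt, hqmod⟩ := get_prime (4*n) r (by positivity) hcor (4*n + 4)
  have hq4 : q % 4 = 1 := by
    have h1 : q ≡ r [MOD 4] := hqmod.of_dvd ⟨n, rfl⟩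
    have h2 := modeq_mod_eq (h1.trans hr4)
    omega
  have hqodd : q % 2 = 1 := by omega
  have hoddq : Odd q := Nat.odd_iff.mpr hqodd
  have hqt : q ≡ (n-1) [MOD n] := (hqmod.of_dvd ⟨4, by ring⟩).trans hrn
  have hJn : J((n:ℤ) | q) = 1 := by
    have hrec : J((q:ℤ) | n) = J((n:ℤ) | q) :=
      jacobiSym.quadratic_reciprocity_one_mod_four hq4 hoddn
    have h1 : J((q:ℤ) | n) = J(((n-1 : ℕ):ℤ) | n) := jacobi_mod_nat hqt
    have h2 : J(((n-1:ℕ):ℤ) | n) = J((-1 : ℤ) | n) := by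
      apply jacobiSym.mod_left'
      have hx : ((n-1:ℕ):ℤ) = -1 + (n:ℤ)*1 := by
        have : ((n-1:ℕ):ℤ) = (n:ℤ) - 1 := by
          have : (1:ℕ) ≤ n := hn
          push_cast [Nat.cast_sub this]; ring
        rw [this]; ring
      rw [hx, Int.add_mul_emod_self_left]
    have h3 : J((-1:ℤ) | n) = 1 := by
      rw [jacobiSym.at_neg_one hoddn, ZMod.χ₄_nat_eq_if_mod_four,
        if_neg (by omega), if_pos h4]
    rw [← hrec, h1, h2, h3]
  have hJ : J(-(n:ℤ) | q) = 1 := by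
    have hneg1 : J((-1:ℤ) | q) = 1 := by
      rw [jacobiSym.at_neg_one hoddq, ZMod.χ₄_nat_eq_if_mod_four,
        if_neg (by omega), if_pos hq4]
    rw [show -(n:ℤ) = -1 * n by ring, jacobiSym.mul_left, hneg1, hJn]; ring
  obtain ⟨b₀, hb₀⟩ := get_sqrt q n hqp hJ
  obtain ⟨g, hgg⟩ := hb₀
  have hnw : n ∣ q + 1 := by
    have h1 : (q+1) ≡ ((n-1)+1) [MOD n] := hqt.add_right 1
    have h2 := modeq_mod_eq h1
    rw [show n-1+1 = n by omega, Nat.mod_self] at h2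
    exact Nat.dvd_of_mod_eq_zero h2
  obtain ⟨w, hww⟩ := hnw
  obtain ⟨x, y, z, hxyz⟩ := threeSq_core (n:ℤ) (q:ℤ) (b₀:ℤ) (g:ℤ) (w:ℤ)
    (by exact_mod_cast hn) (by exact_mod_cast hqp.pos)
    (by exact_mod_cast hgg.symm) (by exact_mod_cast hww.symm)
  exact ⟨x, y, z, hxyz⟩
/-- Three squares for `n ≡ 2 (mod 4)`. -/
private lemma threeSq2mod4 (n : ℕ) (h4 : n % 4 = 2) : ∃ x y z : ℤ, x^2+y^2+z^2 = (n:ℤ) := by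
  have hn : 0 < n := by omega
  set m := n / 2 with hm
  have hnm : n = 2*m := by omega
  have hmodd : m % 2 = 1 := by omega
  have hoddm : Odd m := Nat.odd_iff.mpr hmodd
  have hco8 : Nat.Coprime 8 m := by
    have h2 : Nat.Coprime 2 m := Nat.coprime_two_left.mpr hoddm
    have := (h2.mul h2).mul h2; simpa using this
  have hcotm : Nat.Coprime (m-1) m := by
    have hd := Nat.gcd_dvd_left (m-1) m
    have hd2 := Nat.gcd_dvd_right (m-1) m
    have h3 : Nat.gcd (m-1) m ∣ 1 := by
      have h5 := Nat.dvd_sub hd2 hd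
      simpa [show m - (m-1) = 1 by omega] using h5
    exact Nat.dvd_one.mp h3
  -- c = 1 if m % 4 = 1 else 3
  set c := if m % 4 = 1 then 1 else 3 with hc
  have hcodd : c % 2 = 1 := by rw [hc]; split <;> rfl
  have hcoc8 : Nat.Coprime c 8 := by rw [hc]; split <;> norm_num
  set r := (Nat.chineseRemainder hco8 c (m-1) : ℕ) with hr
  have hr8 : r ≡ c [MOD 8] := (Nat.chineseRemainder hco8 c (m-1)).2.1
  have hrm : r ≡ (m-1) [MOD m] := (Nat.chineseRemainder hco8 c (m-1)).2.2
  have hcor : Nat.Coprime r (8*m) :=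
    Nat.Coprime.mul_right (coprime_of_modeq hr8 hcoc8) (coprime_of_modeq hrm hcotm)
  obtain ⟨q, hqp, hqgt, hqmod⟩ := get_prime (8*m) r (by omega) hcor (8*m + 4)
  have hq8 : q % 8 = c := by
    have h1 : q ≡ r [MOD 8] := hqmod.of_dvd ⟨m, rfl⟩
    have h2 := modeq_mod_eq (h1.trans hr8)
    have hclt : c < 8 := by rw [hc]; split <;> omega
    omega
  have hqodd : q % 2 = 1 := by
    have : c = 1 ∨ c = 3 := by rw [hc]; split <;> simp
    omega
  have hoddq : Odd q := Nat.odd_iff.mpr hqodd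
  have hqt : q ≡ (m-1) [MOD m] := (hqmod.of_dvd ⟨8, by ring⟩).trans hrm
  have hJqm : J((q:ℤ) | m) = ZMod.χ₄ m := by
    have h1 : J((q:ℤ) | m) = J(((m-1 : ℕ):ℤ) | m) := jacobi_mod_nat hqt
    have h2 : J(((m-1:ℕ):ℤ) | m) = J((-1 : ℤ) | m) := by
      apply jacobiSym.mod_left'
      have hx : ((m-1:ℕ):ℤ) = -1 + (m:ℤ)*1 := by
        have h1m : (1:ℕ) ≤ m := by omega
        have : ((m-1:ℕ):ℤ) = (m:ℤ) - 1 := by push_cast [Nat.cast_sub h1m]; ring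
        rw [this]; ring
      rw [hx, Int.add_mul_emod_self_left]
    rw [h1, h2, jacobiSym.at_neg_one hoddm]
  have hJ : J(-(n:ℤ) | q) = 1 := by
    have hsplit : -(n:ℤ) = -1 * (2 * m) := by rw [hnm]; push_cast; ring
    rw [hsplit, jacobiSym.mul_left, jacobiSym.mul_left]
    have hJ2 : J((2:ℤ) | q) = ZMod.χ₈ q := jacobiSym.at_two hoddq
    have hJm1 : J((-1:ℤ) | q) = ZMod.χ₄ q := jacobiSym.at_neg_one hoddq
    rcases (by rw [hc]; split <;> simp : c = 1 ∨ c = 3) with hc1 | hc3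
    · -- m % 4 = 1, q % 8 = 1
      have hm4 : m % 4 = 1 := by
        by_contra hmm
        rw [hc] at hc1; rw [if_neg hmm] at hc1; omega
      have hq81 : q % 8 = 1 := by omega
      have hq41 : q % 4 = 1 := by omega
      have hrec : J((m:ℤ) | q) = J((q:ℤ) | m) :=
        (jacobiSym.quadratic_reciprocity_one_mod_four hq41 hoddm).symm
      have hχ4m : ZMod.χ₄ m = 1 := by
        rw [ZMod.χ₄_nat_eq_if_mod_four, if_neg (by omega), if_pos hm4]
      rw [hJm1, hJ2, hrec, hJqm, hχ4m,
        ZMod.χ₄_nat_eq_if_mod_four, ZMod.χ₈_nat_eq_if_mod_eight,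
        if_neg (by omega), if_pos hq41, if_neg (by omega), if_pos (by omega)]
      ring
    · -- m % 4 = 3, q % 8 = 3
      have hm4 : m % 4 = 3 := by
        rcases Nat.odd_iff.mp hoddm with h
        by_contra hmm
        have : m % 4 = 1 := by omega
        rw [hc, if_pos this] at hc3; omega
      have hq83 : q % 8 = 3 := by omega
      have hq43 : q % 4 = 3 := by omega
      have hrec : J((m:ℤ) | q) = -J((q:ℤ) | m) := by
        have := jacobiSym.quadratic_reciprocity_three_mod_four hm4 hq43
        exact this
      have hχ4m : ZMod.χ₄ m = -1 := by
        rw [ZMod.χ₄_nat_eq_if_mod_four, if_neg (by omega), if_neg (by omega)]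
      rw [hJm1, hJ2, hrec, hJqm, hχ4m,
        ZMod.χ₄_nat_eq_if_mod_four, ZMod.χ₈_nat_eq_if_mod_eight,
        if_neg (by omega), if_neg (by omega), if_neg (by omega), if_neg (by omega)]
      ring
  obtain ⟨b₀, hb₀⟩ := get_sqrt q n hqp hJ
  obtain ⟨g, hgg⟩ := hb₀
  have hnw : n ∣ q + 1 := by
    have hmdvd : m ∣ q + 1 := by
      have h1 : (q+1) ≡ ((m-1)+1) [MOD m] := hqt.add_right 1
      have h2 := modeq_mod_eq h1
      rw [show m-1+1 = m by omega, Nat.mod_self] at h2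
      exact Nat.dvd_of_mod_eq_zero h2
    have h2dvd : 2 ∣ q + 1 := by omega
    rw [hnm]
    exact Nat.Coprime.mul_dvd_of_dvd_of_dvd (Nat.coprime_two_left.mpr hoddm) h2dvd hmdvd
  obtain ⟨w, hww⟩ := hnw
  obtain ⟨x, y, z, hxyz⟩ := threeSq_core (n:ℤ) (q:ℤ) (b₀:ℤ) (g:ℤ) (w:ℤ)
    (by exact_mod_cast hn) (by exact_mod_cast hqp.pos)
    (by exact_mod_cast hgg.symm) (by exact_mod_cast hww.symm)
  exact ⟨x, y, z, hxyz⟩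

/-- Three squares for all needed residue classes. -/
private lemma threeSqAll (n : ℕ) (h : n % 8 = 3 ∨ n % 4 = 1 ∨ n % 4 = 2) :
    ∃ x y z : ℤ, x^2+y^2+z^2 = (n:ℤ) := by
  rcases h with h | h | h
  exacts [threeSq3mod8 n h, threeSq1mod4 n h, threeSq2mod4 n h]
private lemma sq_mod8 (w : ℤ) : ∃ A : ℤ,
    (w % 2 = 0 ∧ (w^2 = 8*A ∨ w^2 = 8*A + 4)) ∨ (w % 2 = 1 ∧ w^2 = 8*A + 1) := by
  rcases Int.even_or_odd w with ⟨u, hu⟩ | ⟨u, hu⟩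
  · rcases Int.even_or_odd u with ⟨v, hv⟩ | ⟨v, hv⟩
    · exact ⟨2*v^2, Or.inl ⟨by omega, Or.inl (by rw [hu, hv]; ring)⟩⟩
    · exact ⟨2*v^2 + 2*v, Or.inl ⟨by omega, Or.inr (by rw [hu, hv]; ring)⟩⟩
  · obtain ⟨v, hv⟩ := Int.even_mul_succ_self u
    refine ⟨v, Or.inr ⟨by omega, ?_⟩⟩
    have : w^2 = 4*(u*(u+1)) + 1 := by rw [hu]; ring
    omega

private lemma sq_parity (w : ℤ) : ∃ v : ℤ, w^2 = w + 2*v := by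
  obtain ⟨v, hv⟩ := Int.even_mul_succ_self (w - 1)
  exact ⟨v, by nlinarith [hv]⟩

private lemma assemble (b c d e a : ℤ)
    (hq : c^2 + d^2 + e^2 = 4*a - b^2)
    (h41 : 4 ∣ b+c+d+e) (h42 : 4 ∣ b+c-d-e) (h43 : 4 ∣ b-c+d-e) (h44 : 4 ∣ b-c-d+e)
    (hp1 : 0 ≤ b+c+d+e) (hp2 : 0 ≤ b+c-d-e) (hp3 : 0 ≤ b-c+d-e) (hp4 : 0 ≤ b-c-d+e) :
    ∃ x1 x2 x3 x4 : ℤ, 0 ≤ x1 ∧ 0 ≤ x2 ∧ 0 ≤ x3 ∧ 0 ≤ x4 ∧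
      x1+x2+x3+x4 = b ∧ x1^2+x2^2+x3^2+x4^2 = a := by
  obtain ⟨x1, hx1⟩ := h41
  obtain ⟨x2, hx2⟩ := h42
  obtain ⟨x3, hx3⟩ := h43
  obtain ⟨x4, hx4⟩ := h44
  refine ⟨x1, x2, x3, x4, by omega, by omega, by omega, by omega, by omega, ?_⟩
  have h16 : 16*(x1^2+x2^2+x3^2+x4^2) = 16*a := by
    have e1 : (4*x1)^2 + (4*x2)^2 + (4*x3)^2 + (4*x4)^2
        = (b+c+d+e)^2 + (b+c-d-e)^2 + (b-c+d-e)^2 + (b-c-d+e)^2 := by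
      rw [← hx1, ← hx2, ← hx3, ← hx4]
    have e2 : (b+c+d+e)^2 + (b+c-d-e)^2 + (b-c+d-e)^2 + (b-c-d+e)^2
        = 4*(b^2 + (c^2+d^2+e^2)) := by ring
    nlinarith [e1, e2, hq]
  linarith

private lemma poly_cast (m : ℕ) (x : ℤ) (hx : 0 ≤ x) :
    2*(polygonal m x.toNat : ℤ) = m*(x^2 - x) + 2*x := by
  set n := x.toNat with hn
  have hxn : (n : ℤ) = x := Int.toNat_of_nonneg hx
  have h2 : 2 ∣ n*(n-1) := by
    rcases Nat.even_or_odd n with h | h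
    · exact Dvd.dvd.mul_right h.two_dvd _
    · rcases n with _ | k
      · simp
      · have hk : Even k := Nat.Odd.sub_odd h odd_one
        have : k + 1 - 1 = k := rfl
        rw [this]
        exact Dvd.dvd.mul_left hk.two_dvd _
  have h2' : 2 ∣ m*(n*(n-1)) := h2.mul_left m
  have key : 2 * polygonal m n = m*(n*(n-1)) + 2*n := by
    unfold polygonal; omega
  rcases Nat.eq_zero_or_pos n with h0 | h0
  · have hx0 : x = 0 := by omega
    rw [hx0] at *
    have : polygonal m n = 0 := by rw [h0]; simp [polygonal]
    rw [this]; push_cast; ring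
  · have hcast : ((n-1 : ℕ):ℤ) = (n:ℤ) - 1 := by
      have h1 : (1:ℕ) ≤ n := h0
      push_cast [Nat.cast_sub h1]; ring
    have keyZ := congrArg (Nat.cast : ℕ → ℤ) key
    push_cast [hcast] at keyZ
    rw [← hxn]
    nlinarith [keyZ]
set_option maxHeartbeats 2000000 in
private lemma window (m N : ℕ) (hm4 : 4 ≤ m) (hdvd2 : (2:ℤ) ∣ (m:ℤ)) (hN : 28*m^3 ≤ N) :
    ∃ b T : ℤ, 0 ≤ b ∧ 1 ≤ T ∧ (m:ℤ)*T = N - b ∧ b % 2 = (N:ℤ) % 2 ∧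
      3*(b + 2*T) ≤ b^2 ∧ b^2 ≤ 4*(b + 2*T) ∧
      3*((b+m) + 2*(T-1)) ≤ (b+m)^2 ∧ (b+m)^2 ≤ 4*((b+m) + 2*(T-1)) := by
  have hm0 : 0 < m := by omega
  set s : ℕ := Nat.sqrt (6*N/m) with hs
  -- basic sqrt facts
  have hs1 : (m:ℤ)*(s:ℤ)^2 ≤ 6*(N:ℤ) := by
    have h1 : s^2 ≤ 6*N/m := Nat.sqrt_le' _
    have h2 : m * (6*N/m) ≤ 6*N := Nat.mul_div_le _ _
    have h3 : m * s^2 ≤ 6*N := le_trans (Nat.mul_le_mul_left m h1) h2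
    exact_mod_cast h3
  have hs2 : 6*(N:ℤ) < (m:ℤ)*((s:ℤ)+1)^2 := by
    have h1 : 6*N/m < (s+1)^2 := Nat.lt_succ_sqrt' _
    have h2 : 6*N < m*(6*N/m) + m := by
      have := Nat.div_add_mod (6*N) m
      have := Nat.mod_lt (6*N) hm0
      omega
    have h3 : m*(6*N/m) + m ≤ m*(s+1)^2 := by
      have h4 : 6*N/m + 1 ≤ (s+1)^2 := h1
      calc m*(6*N/m) + m = m*(6*N/m + 1) := by ring
        _ ≤ m*(s+1)^2 := Nat.mul_le_mul_left m h4
    have : 6*N < m*(s+1)^2 := lt_of_lt_of_le h2 h3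
    exact_mod_cast this
  have hsm : 12*(m:ℤ) ≤ (s:ℤ) := by
    have h1 : (12*m)*(12*m) ≤ 6*N/m := by
      rw [Nat.le_div_iff_mul_le hm0]
      nlinarith [hN]
    have h2 : 12*m ≤ s := by
      rw [hs]
      exact Nat.le_sqrt.mpr h1
    exact_mod_cast h2
  have hmZ : (4:ℤ) ≤ (m:ℤ) := by exact_mod_cast hm4
  have hNZ : 28*(m:ℤ)^3 ≤ (N:ℤ) := by exact_mod_cast hN
  -- monotone positivity of P above s+3
  have hPmono : ∀ x : ℤ, (s:ℤ)+3 ≤ x →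
      0 ≤ (m:ℤ)*x^2 - (3*m-6)*x - 6*N := by
    intro x hx
    have hs0 : (48:ℤ) ≤ s := by linarith
    have hPs3 : 0 < (m:ℤ)*((s:ℤ)+3)^2 - (3*m-6)*((s:ℤ)+3) - 6*N := by nlinarith
    have hfac : 0 ≤ (x - ((s:ℤ)+3)) * ((m:ℤ)*(x + (s:ℤ)+3) - (3*m-6)) := by
      apply mul_nonneg (by linarith)
      nlinarith
    nlinarith
  -- least j in the AP with P ≥ 0
  have hex : ∃ j : ℕ, 0 ≤ (m:ℤ)*(((N%m : ℕ):ℤ) + m*j)^2 - (3*m-6)*(((N%m : ℕ):ℤ) + m*j) - 6*N := by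
    refine ⟨s+3, hPmono _ ?_⟩
    have h2 : (0:ℤ) ≤ ((N%m : ℕ):ℤ) := by positivity
    have h3 : ((s:ℤ)+3) ≤ (m:ℤ)*((s:ℤ)+3) :=
      le_mul_of_one_le_left (by linarith) (by linarith)
    have h4 : ((s+3 : ℕ):ℤ) = (s:ℤ)+3 := by push_cast; ring
    rw [h4]
    linarith
  classical
  set j₀ := Nat.find hex with hj₀
  set b₀ : ℤ := ((N%m : ℕ):ℤ) + m*j₀ with hb₀
  have hQ0 : 0 ≤ (m:ℤ)*b₀^2 - (3*m-6)*b₀ - 6*N := Nat.find_spec hex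
  have hb₀0 : 0 ≤ b₀ := by
    have : (0:ℤ) ≤ ((N%m : ℕ):ℤ) := by positivity
    have : (0:ℤ) ≤ (m:ℤ)*j₀ := by positivity
    linarith
  have hj₀pos : 0 < j₀ := by
    rcases Nat.eq_zero_or_pos j₀ with h0 | h
    · exfalso
      have h3 : ((N%m:ℕ):ℤ) < (m:ℤ) := by exact_mod_cast Nat.mod_lt N hm0
      have h4 : (0:ℤ) ≤ ((N%m:ℕ):ℤ) := by positivity
      have h5 : b₀ = ((N%m:ℕ):ℤ) := by rw [hb₀, h0]; push_cast; ring
      have h6 : b₀^2 ≤ m^2 := by nlinarith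
      nlinarith [hQ0, mul_nonneg (by linarith : (0:ℤ) ≤ 3*(m:ℤ)-6) (by linarith : (0:ℤ) ≤ b₀)]
    · exact h
  have hPneg : (m:ℤ)*(b₀-m)^2 - (3*m-6)*(b₀-m) - 6*N < 0 := by
    have h1 := Nat.find_min hex (show j₀ - 1 < j₀ by omega)
    have h2 : ((N%m : ℕ):ℤ) + m*((j₀ - 1 : ℕ):ℤ) = b₀ - m := by
      rw [hb₀]
      have : ((j₀ - 1 : ℕ):ℤ) = (j₀:ℤ) - 1 := by
        have : (1:ℕ) ≤ j₀ := hj₀pos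
        push_cast [Nat.cast_sub this]; ring
      rw [this]; ring
    push_cast at h1 h2 ⊢
    rw [h2] at h1
    linarith
  have hb₀ub : b₀ ≤ (s:ℤ) + 2 + m := by
    by_contra hcon
    push_neg at hcon
    have : (s:ℤ) + 3 ≤ b₀ - m := by linarith
    exact absurd (hPmono _ this) (not_le.mpr hPneg)
  -- the key upper estimate U(b₀ + m) ≤ 0
  have hC : (0:ℤ) ≤ 2*N - 4*m^3 - 14*m - 4 := by nlinarith
  have h48 : (0:ℤ) ≤ 48*(m:ℤ)^3 - 158*m^2 + 8*m - 24 := by nlinarith [sq_nonneg ((m:ℤ) - 4)]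
  set α : ℤ := 4*(m:ℤ)^2 - m + 2 with hα
  set C : ℤ := 2*(N:ℤ) - 4*(m:ℤ)^3 - 14*m - 4 with hCdef
  have hα0 : (0:ℤ) < α := by rw [hα]; nlinarith
  have hC0 : (0:ℤ) ≤ C := by rw [hCdef]; linarith [hC]
  have hi : 6*(N:ℤ)*α^2 ≤ (m:ℤ)*C^2 := by
    have hkey : (m:ℤ)*C^2 - 6*N*α^2
        = 4*m*N*(N - 28*m^3) + N*(48*m^3 - 158*m^2 + 8*m - 24) + m*(4*(m:ℤ)^3+14*m+4)^2 := by
      rw [hα, hCdef]; ring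
    have t1 : (0:ℤ) ≤ 4*(m:ℤ)*N*(N - 28*m^3) := by
      apply mul_nonneg
      · apply mul_nonneg (by linarith) (by linarith [Int.natCast_nonneg N])
      · linarith
    have t2 : (0:ℤ) ≤ (N:ℤ)*(48*(m:ℤ)^3 - 158*m^2 + 8*m - 24) :=
      mul_nonneg (by linarith [Int.natCast_nonneg N]) h48
    have t3 : (0:ℤ) ≤ (m:ℤ)*(4*(m:ℤ)^3+14*m+4)^2 :=
      mul_nonneg (by linarith) (sq_nonneg _)
    linarith
  have hs0 : (0:ℤ) ≤ (s:ℤ) := by positivity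
  have hαs : α*s ≤ C := by
    have h1 : (m:ℤ)*(α*s)^2 ≤ (m:ℤ)*C^2 := by
      have h2 : (m:ℤ)*(α*s)^2 = α^2 * ((m:ℤ)*s^2) := by ring
      have h3 : α^2 * ((m:ℤ)*(s:ℤ)^2) ≤ α^2 * (6*N) :=
        mul_le_mul_of_nonneg_left hs1 (sq_nonneg α)
      have h4 : α^2 * (6*(N:ℤ)) = 6*N*α^2 := by ring
      rw [h2]
      rw [h4] at h3
      linarith
    have h4 : (α*s)^2 ≤ C^2 := le_of_mul_le_mul_left h1 (by linarith)
    by_contra hcon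
    push_neg at hcon
    have h5 : (0:ℤ) ≤ α*s := mul_nonneg (by linarith) hs0
    nlinarith
  have hαb : α*b₀ ≤ 2*(N:ℤ) + 7*m^2 - 14*m := by
    have h1 : α*b₀ ≤ α*((s:ℤ)+2+m) := mul_le_mul_of_nonneg_left hb₀ub (by linarith)
    have h2 : α*((s:ℤ)+2+m) = α*s + (4*(m:ℤ)^3+7*m^2+4) := by rw [hα]; ring
    rw [hCdef] at hαs
    linarith
  have hU1 : (m:ℤ)*(b₀+m)^2 - (4*m-8)*(b₀+m) - 8*N ≤ 0 := by
    have hexp : (m:ℤ)*(b₀+m)^2 - (4*m-8)*(b₀+m) - 8*N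
        = ((m:ℤ)*(b₀-m)^2 - (3*m-6)*(b₀-m) - 6*N)
          + (α*b₀ - (2*N + 7*m^2 - 14*m)) := by rw [hα]; ring
    linarith
  have hposd : (0:ℤ) ≤ 2*m^2*b₀ + m^3 - (4*m-8)*m := by
    have t1 : (0:ℤ) ≤ 2*m^2*b₀ :=
      mul_nonneg (by positivity) hb₀0
    have t2 : (0:ℤ) ≤ (m:ℤ)^3 - (4*m-8)*m := by nlinarith [sq_nonneg ((m:ℤ)-2)]
    linarith
  have hposd' : (0:ℤ) ≤ 2*m^2*b₀ + m^3 - (3*m-6)*m := by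
    have t1 : (0:ℤ) ≤ 2*m^2*b₀ :=
      mul_nonneg (by positivity) hb₀0
    have t2 : (0:ℤ) ≤ (m:ℤ)^3 - (3*m-6)*m := by nlinarith [sq_nonneg ((m:ℤ)-2)]
    linarith
  have hU0 : (m:ℤ)*b₀^2 - (4*m-8)*b₀ - 8*N ≤ 0 := by
    have hdiff : (m:ℤ)*(b₀+m)^2 - (4*m-8)*(b₀+m) - ((m:ℤ)*b₀^2 - (4*m-8)*b₀)
        = 2*m^2*b₀ + m^3 - (4*m-8)*m := by ring
    linarith
  have hP1 : 0 ≤ (m:ℤ)*(b₀+m)^2 - (3*m-6)*(b₀+m) - 6*N := by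
    have hdiff : (m:ℤ)*(b₀+m)^2 - (3*m-6)*(b₀+m) - ((m:ℤ)*b₀^2 - (3*m-6)*b₀)
        = 2*m^2*b₀ + m^3 - (3*m-6)*m := by ring
    linarith
  -- T
  set T₀ : ℤ := ((N/m : ℕ):ℤ) - j₀ with hT₀
  have hmT : (m:ℤ)*T₀ = N - b₀ := by
    have hdm := Nat.div_add_mod N m
    have hdmZ : (m:ℤ)*((N/m : ℕ):ℤ) + ((N%m : ℕ):ℤ) = (N:ℤ) := by exact_mod_cast hdm
    rw [hT₀, hb₀]; linarith [hdmZ]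
  have hT1 : 1 ≤ T₀ := by
    have hA : 4*(s:ℤ)^2 ≤ 6*N := by
      nlinarith [mul_nonneg (by linarith : (0:ℤ) ≤ (m:ℤ) - 4) (sq_nonneg (s:ℤ))]
    have hs48 : (48:ℤ) ≤ (s:ℤ) := by linarith
    have hB : 96*(s:ℤ) ≤ 3*N := by
      nlinarith [mul_nonneg (by linarith : (0:ℤ) ≤ (s:ℤ) - 48) (by linarith : (0:ℤ) ≤ (s:ℤ))]
    have hN2 : (1792:ℤ) ≤ (N:ℤ) := by
      have t1 : (0:ℤ) ≤ ((m:ℤ)-4)*((m:ℤ)^2+4*m+16) := by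
        apply mul_nonneg (by linarith)
        nlinarith [sq_nonneg ((m:ℤ)+2)]
      nlinarith
    have hsN : (s:ℤ) + 2 + 2*m ≤ (N:ℤ) := by linarith
    have h1 : (m:ℤ)*1 ≤ (m:ℤ)*T₀ := by
      rw [mul_one]
      linarith [hmT, hb₀ub]
    exact le_of_mul_le_mul_left h1 (by linarith)
  clear_value T₀ b₀ j₀ s
  clear hb₀ hT₀ hj₀ hs hex
  have hpar : b₀ % 2 = (N:ℤ) % 2 := by
    obtain ⟨K, hK⟩ := hdvd2
    have h1 : b₀ = (N:ℤ) - 2*(K*T₀) := by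
      have : (m:ℤ)*T₀ = 2*(K*T₀) := by rw [hK]; ring
      linarith [hmT]
    omega
  refine ⟨b₀, T₀, hb₀0, hT1, hmT, hpar, ?_, ?_, ?_, ?_⟩
  · have h1 : (m:ℤ)*(3*(b₀+2*T₀)) = (3*m-6)*b₀ + 6*N := by
      have hh : (m:ℤ)*(2*T₀) = 2*(N - b₀) := by linarith [hmT]
      linear_combination (3:ℤ)*hh
    have h2 : (m:ℤ)*(3*(b₀+2*T₀)) ≤ (m:ℤ)*b₀^2 := by linarith [hQ0]
    exact le_of_mul_le_mul_left h2 (by positivity)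
  · have h1 : (m:ℤ)*(4*(b₀+2*T₀)) = (4*m-8)*b₀ + 8*N := by
      have hh : (m:ℤ)*(2*T₀) = 2*(N - b₀) := by linarith [hmT]
      linear_combination (4:ℤ)*hh
    have h2 : (m:ℤ)*b₀^2 ≤ (m:ℤ)*(4*(b₀+2*T₀)) := by linarith [hU0]
    exact le_of_mul_le_mul_left h2 (by positivity)
  · have h1 : (m:ℤ)*(3*((b₀+m)+2*(T₀-1))) = (3*m-6)*(b₀+m) + 6*N := by
      have hh : (m:ℤ)*(2*T₀) = 2*(N - b₀) := by linarith [hmT]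
      linear_combination (3:ℤ)*hh
    have h2 : (m:ℤ)*(3*((b₀+m)+2*(T₀-1))) ≤ (m:ℤ)*(b₀+m)^2 := by linarith [hP1]
    exact le_of_mul_le_mul_left h2 (by positivity)
  · have h1 : (m:ℤ)*(4*((b₀+m)+2*(T₀-1))) = (4*m-8)*(b₀+m) + 8*N := by
      have hh : (m:ℤ)*(2*T₀) = 2*(N - b₀) := by linarith [hmT]
      linear_combination (4:ℤ)*hh
    have h2 : (m:ℤ)*(b₀+m)^2 ≤ (m:ℤ)*(4*((b₀+m)+2*(T₀-1))) := by linarith [hU1]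
    exact le_of_mul_le_mul_left h2 (by positivity)
private lemma sum_sq_bound (c d e B : ℤ) (hc : 0 ≤ c) (hd : 0 ≤ d) (he : 0 ≤ e)
    (hB : 0 ≤ B) (h : 3*(c^2+d^2+e^2) ≤ B^2) : c + d + e ≤ B := by
  have h1 : (c+d+e)^2 ≤ 3*(c^2+d^2+e^2) := by
    nlinarith [sq_nonneg (c-d), sq_nonneg (d-e), sq_nonneg (c-e)]
  by_contra hcon
  push_neg at hcon
  nlinarith

private lemma oddcase (m N b T : ℤ) (hb : 0 ≤ b) (hT : 0 ≤ T) (hmT : m*T = N - b)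
    (hP : 3*(b+2*T) ≤ b^2) (hU : b^2 ≤ 4*(b+2*T)) (hbodd : b % 2 = 1) :
    ∃ x1 x2 x3 x4 : ℤ, 0 ≤ x1 ∧ 0 ≤ x2 ∧ 0 ≤ x3 ∧ 0 ≤ x4 ∧
      x1+x2+x3+x4 = b ∧ x1^2+x2^2+x3^2+x4^2 = b + 2*T := by
  set a : ℤ := b + 2*T with ha
  set F : ℤ := 4*a - b^2 with hF
  have hF0 : 0 ≤ F := by rw [hF]; linarith
  have hF8 : F % 8 = 3 := by
    obtain ⟨A, hA⟩ := sq_mod8 b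
    rcases hA with ⟨hp, -⟩ | ⟨-, hsq⟩
    · omega
    · rw [hF, ha]; omega
  have h3F : 3*F ≤ b^2 := by rw [hF]; linarith
  obtain ⟨x, y, z, hxyz⟩ := threeSqAll F.toNat (by omega)
  have htn : (F.toNat : ℤ) = F := Int.toNat_of_nonneg hF0
  rw [htn] at hxyz
  set c := |x| with hc
  set d := |y| with hd
  set e := |z| with he
  have hc0 : 0 ≤ c := abs_nonneg x
  have hd0 : 0 ≤ d := abs_nonneg y
  have he0 : 0 ≤ e := abs_nonneg z
  have hsum : c^2 + d^2 + e^2 = F := by rw [hc, hd, he, sq_abs, sq_abs, sq_abs]; exact hxyz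
  obtain ⟨A1, h1⟩ := sq_mod8 c
  obtain ⟨A2, h2⟩ := sq_mod8 d
  obtain ⟨A3, h3⟩ := sq_mod8 e
  have hpar : c % 2 = 1 ∧ d % 2 = 1 ∧ e % 2 = 1 := by
    rcases h1 with ⟨hp1, h1'|h1'⟩ | ⟨hp1, h1'⟩ <;> rcases h2 with ⟨hp2, h2'|h2'⟩ | ⟨hp2, h2'⟩ <;>
      rcases h3 with ⟨hp3, h3'|h3'⟩ | ⟨hp3, h3'⟩ <;> omega
  have hcde : c + d + e ≤ b := sum_sq_bound c d e b hc0 hd0 he0 hb (by linarith)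
  have hsign : 4 ∣ b+c+d+e ∨ 4 ∣ b+c+d-e := by omega
  rcases hsign with hs | hs
  · apply assemble b c d e a _ hs (by omega) (by omega) (by omega)
      (by linarith) (by linarith) (by linarith) (by linarith)
    rw [← hF]; exact hsum
  · apply assemble b c d (-e) a _ (by omega) (by omega) (by omega) (by omega)
      (by linarith) (by linarith) (by linarith) (by linarith)
    rw [← hF]; rw [show (-e)^2 = e^2 by ring]; exact hsum

private lemma evencase (m N b T β : ℤ) (hb : 0 ≤ b) (hT : 0 ≤ T) (hmT : m*T = N - b)
    (hP : 3*(b+2*T) ≤ b^2) (hU : b^2 ≤ 4*(b+2*T)) (hβ : b = 2*β)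
    (hW : (b + 2*T - β^2) % 4 = 1 ∨ (b + 2*T - β^2) % 4 = 2) :
    ∃ x1 x2 x3 x4 : ℤ, 0 ≤ x1 ∧ 0 ≤ x2 ∧ 0 ≤ x3 ∧ 0 ≤ x4 ∧
      x1+x2+x3+x4 = b ∧ x1^2+x2^2+x3^2+x4^2 = b + 2*T := by
  set a : ℤ := b + 2*T with ha
  set W : ℤ := a - β^2 with hWd
  have hβ0 : 0 ≤ β := by linarith
  have hW0 : 0 ≤ W := by rw [hWd]; nlinarith
  have h3W : 3*W ≤ β^2 := by rw [hWd]; nlinarith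
  obtain ⟨x, y, z, hxyz⟩ := threeSqAll W.toNat (by omega)
  have htn : (W.toNat : ℤ) = W := Int.toNat_of_nonneg hW0
  rw [htn] at hxyz
  set c' := |x| with hc
  set d' := |y| with hd
  set e' := |z| with he
  have hc0 : 0 ≤ c' := abs_nonneg x
  have hd0 : 0 ≤ d' := abs_nonneg y
  have he0 : 0 ≤ e' := abs_nonneg z
  have hsum : c'^2 + d'^2 + e'^2 = W := by rw [hc, hd, he, sq_abs, sq_abs, sq_abs]; exact hxyz
  obtain ⟨v1, hv1⟩ := sq_parity c'
  obtain ⟨v2, hv2⟩ := sq_parity d'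
  obtain ⟨v3, hv3⟩ := sq_parity e'
  obtain ⟨vβ, hvβ⟩ := sq_parity β
  have hcd : c' + d' + e' ≤ β := sum_sq_bound c' d' e' β hc0 hd0 he0 hβ0 (by linarith)
  -- parities: c'+d'+e' ≡ W (mod 2), W ≡ β (mod 2)
  apply assemble b (2*c') (2*d') (2*e') a
  · have : (2*c')^2 + (2*d')^2 + (2*e')^2 = 4*W := by
      have : (2*c')^2 + (2*d')^2 + (2*e')^2 = 4*(c'^2+d'^2+e'^2) := by ring
      rw [this, hsum]
    rw [this, hWd]; linear_combination (b + 2*β) * hβ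
  · omega
  · omega
  · omega
  · omega
  · linarith
  · linarith
  · linarith
  · linarith
private lemma finish_sum (m N : ℕ) (b T x1 x2 x3 x4 : ℤ)
    (h1 : 0 ≤ x1) (h2 : 0 ≤ x2) (h3 : 0 ≤ x3) (h4 : 0 ≤ x4)
    (hsum : x1+x2+x3+x4 = b) (hsq : x1^2+x2^2+x3^2+x4^2 = b + 2*T)
    (hmT : (m:ℤ)*T = N - b) :
    N = polygonal m x1.toNat + polygonal m x2.toNat + polygonal m x3.toNat
        + polygonal m x4.toNat := by
  have e1 := poly_cast m x1 h1
  have e2 := poly_cast m x2 h2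
  have e3 := poly_cast m x3 h3
  have e4 := poly_cast m x4 h4
  have key : 2*(N:ℤ) = 2*((polygonal m x1.toNat : ℤ) + (polygonal m x2.toNat : ℤ)
      + (polygonal m x3.toNat : ℤ) + (polygonal m x4.toNat : ℤ)) := by
    linear_combination (-1:ℤ)*e1 - e2 - e3 - e4 - (m:ℤ)*hsq + (m:ℤ)*hsum - 2*hsum - 2*hmT
  have key2 : (N:ℤ) = (polygonal m x1.toNat : ℤ) + (polygonal m x2.toNat : ℤ)
      + (polygonal m x3.toNat : ℤ) + (polygonal m x4.toNat : ℤ) := by linarith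
  exact_mod_cast key2

theorem sum_four_polygonal (m : ℕ) (hm : 0 < m) (h4 : 4 ∣ m)
    (N : ℕ) (hN : 28 * m ^ 3 ≤ N) :
    ∃ x₁ x₂ x₃ x₄ : ℕ,
      N = polygonal m x₁ + polygonal m x₂ + polygonal m x₃ + polygonal m x₄ := by
  have hm4 : 4 ≤ m := Nat.le_of_dvd hm h4
  obtain ⟨k, hk⟩ := h4
  have hkZ : (m:ℤ) = 4*(k:ℤ) := by exact_mod_cast hk
  have hdvd2 : (2:ℤ) ∣ (m:ℤ) := ⟨2*(k:ℤ), by rw [hkZ]; ring⟩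
  obtain ⟨b, T, hb, hT1, hmT, hpar, hP0, hU0, hP1, hU1⟩ := window m N hm4 hdvd2 hN
  have hNpar : (N:ℤ) % 2 = 0 ∨ (N:ℤ) % 2 = 1 := by omega
  rcases hNpar with hNe | hNo
  · -- N even
    have hbe : b % 2 = 0 := by omega
    obtain ⟨β, hβ⟩ : ∃ β : ℤ, b = 2*β := ⟨b/2, by omega⟩
    have hβ₁ : b + m = 2*(β + 2*k) := by rw [hkZ]; linarith
    have hdiffW : ((b+m) + 2*(T-1) - (β + 2*k)^2)
        = (b + 2*T - β^2) - 2 + 4*((k:ℤ) - k*β - k*k) := by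
      linear_combination (1:ℤ)*hkZ
    have hW4 : (b + 2*T - β^2) % 4 = 0 ∨ (b + 2*T - β^2) % 4 = 1 ∨
        (b + 2*T - β^2) % 4 = 2 ∨ (b + 2*T - β^2) % 4 = 3 := by omega
    have hmT' : (m:ℤ)*(T-1) = (N:ℤ) - (b+m) := by linear_combination hmT
    rcases hW4 with h | h | h | h
    · obtain ⟨x1, x2, x3, x4, hx1, hx2, hx3, hx4, hsum, hsq⟩ :=
        evencase m N (b+m) (T-1) (β + 2*k) (by linarith [hkZ]) (by linarith) hmT' hP1 hU1 hβ₁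
          (by omega)
      exact ⟨x1.toNat, x2.toNat, x3.toNat, x4.toNat,
        finish_sum m N (b+m) (T-1) x1 x2 x3 x4 hx1 hx2 hx3 hx4 hsum hsq hmT'⟩
    · obtain ⟨x1, x2, x3, x4, hx1, hx2, hx3, hx4, hsum, hsq⟩ :=
        evencase m N b T β hb (by linarith) hmT hP0 hU0 hβ (by omega)
      exact ⟨x1.toNat, x2.toNat, x3.toNat, x4.toNat,
        finish_sum m N b T x1 x2 x3 x4 hx1 hx2 hx3 hx4 hsum hsq hmT⟩
    · obtain ⟨x1, x2, x3, x4, hx1, hx2, hx3, hx4, hsum, hsq⟩ :=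
        evencase m N b T β hb (by linarith) hmT hP0 hU0 hβ (by omega)
      exact ⟨x1.toNat, x2.toNat, x3.toNat, x4.toNat,
        finish_sum m N b T x1 x2 x3 x4 hx1 hx2 hx3 hx4 hsum hsq hmT⟩
    · obtain ⟨x1, x2, x3, x4, hx1, hx2, hx3, hx4, hsum, hsq⟩ :=
        evencase m N (b+m) (T-1) (β + 2*k) (by linarith [hkZ]) (by linarith) hmT' hP1 hU1 hβ₁
          (by omega)
      exact ⟨x1.toNat, x2.toNat, x3.toNat, x4.toNat,
        finish_sum m N (b+m) (T-1) x1 x2 x3 x4 hx1 hx2 hx3 hx4 hsum hsq hmT'⟩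
  · -- N odd
    have hbodd : b % 2 = 1 := by omega
    obtain ⟨x1, x2, x3, x4, hx1, hx2, hx3, hx4, hsum, hsq⟩ :=
      oddcase m N b T hb (by linarith) hmT hP0 hU0 hbodd
    exact ⟨x1.toNat, x2.toNat, x3.toNat, x4.toNat,
      finish_sum m N b T x1 x2 x3 x4 hx1 hx2 hx3 hx4 hsum hsq hmT⟩
end

section
/- Let m be a positive integer divisible by 4. Then there are infinitely many positive integers N that cannot be written as N = p_{m+4}(x₁) + p_{m+4}(x₂) + p_{m+4}(x₃) + p_{m+4}(x₄) with x₁, x₂, x₃, x₄ nonnegative integers. -/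
/-!
For `m = 4k` put `q = 2k + 1`. Completing the square gives
`((2k+1)x - k)² = q · p_{m+4}(x) + k²`, so a representation `N = Σ p_{m+4}(xᵢ)` yields four
nonzero squares `zᵢ² = ((2k+1)xᵢ - k)²` with `Σ zᵢ² = qN + 4k²`, each `zᵢ ≡ -k (mod q)`.
Take `N` with `qN + 4k² = 2^r`, where `r` is an odd multiple of the order `d` of `2` modulo `q`
(possible since `4k² ≡ 1`). As squares are `0`, `1` or `4` modulo 8, four nonzero squares
summing to `2^r` are all even, and halving repeatedly shows that they all equal `4^s`, with
`r = 2s + 2`. Size forces `z₁ = 2^s`, hence `2^{s+1} ≡ -2k ≡ 1`,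
so `d ∣ s + 1 = r / 2`, contradicting the choice of `r`.
-/

/-- Polygonal number of order `m+4`: `p_{m+4}(n) = ((m+2)·n² − m·n)/2 = (m+2)·n(n−1)/2 + n`. -/
def polygonalM4 (m n : ℕ) : ℕ := (m + 2) * (n * (n - 1)) / 2 + n

theorem two_mul_polygonalM4 (m n : ℕ) :
    2 * (polygonalM4 m n : ℤ) = (m + 2) * n ^ 2 - m * n := by
  obtain ⟨t, ht⟩ := Nat.even_mul_pred_self n
  have hdiv : (m + 2) * (n * (n - 1)) / 2 = (m + 2) * t := by
    rw [ht, ← two_mul, mul_left_comm, Nat.mul_div_cancel_left _ two_pos]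
  have hcast : ((n * (n - 1) : ℕ) : ℤ) = n * (n - 1) := by cases n <;> simp
  have ht' : (2 * t : ℤ) = n * (n - 1) := by rw [← hcast, ht]; push_cast; ring
  rw [polygonalM4, hdiv]
  push_cast
  linear_combination (m + 2 : ℤ) * ht'

theorem sq_mul_sub_eq_polygonalM4_four_mul (k x : ℕ) :
    ((2 * k + 1) * x - k : ℤ) ^ 2 = (2 * k + 1) * polygonalM4 (4 * k) x + k ^ 2 := by
  have h := two_mul_polygonalM4 (4 * k) x
  push_cast at h
  have hp : (polygonalM4 (4 * k) x : ℤ) = (2 * k + 1) * x ^ 2 - 2 * k * x := by linarith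
  rw [hp]
  ring

theorem two_dvd_of_eight_dvd_sum_four_sq {a b c d : ℤ} (h : 8 ∣ a ^ 2 + b ^ 2 + c ^ 2 + d ^ 2) :
    2 ∣ a := by
  -- `4 * a = 0` in `ZMod 8` says that `a` is even.
  have hmod : ∀ a b c d : ZMod 8, a ^ 2 + b ^ 2 + c ^ 2 + d ^ 2 = 0 → 4 * a = 0 := by decide
  have h4a := hmod a b c d (by exact_mod_cast (ZMod.intCast_zmod_eq_zero_iff_dvd _ 8).mpr h)
  have h8 : (8 : ℤ) ∣ 4 * a := (ZMod.intCast_zmod_eq_zero_iff_dvd _ 8).mp (by exact_mod_cast h4a)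
  omega

theorem abs_eq_two_pow_of_sum_four_sq_eq_two_pow {r : ℕ} {a b c d : ℤ} (ha : a ≠ 0) (hb : b ≠ 0)
    (hc : c ≠ 0) (hd : d ≠ 0) (h : a ^ 2 + b ^ 2 + c ^ 2 + d ^ 2 = 2 ^ r) :
    ∃ s, r = 2 * s + 2 ∧ |a| = 2 ^ s := by
  induction r using Nat.strong_induction_on generalizing a b c d with
  | _ r ih =>
  have ha2 : 0 < a ^ 2 := by positivity
  have hb2 : 0 < b ^ 2 := by positivity
  have hc2 : 0 < c ^ 2 := by positivity
  have hd2 : 0 < d ^ 2 := by positivity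
  rcases lt_or_ge r 3 with hr | hr
  · interval_cases r
    · norm_num at h; omega
    · norm_num at h; omega
    · refine ⟨0, rfl, ?_⟩
      have hsq : |a| ^ 2 = 1 ^ 2 := by rw [sq_abs]; norm_num at h; omega
      exact (sq_eq_sq₀ (abs_nonneg a) zero_le_one).mp hsq
  · obtain ⟨r, rfl⟩ : ∃ r', r = r' + 3 := ⟨r - 3, by omega⟩
    have h8 : (8 : ℤ) ∣ a ^ 2 + b ^ 2 + c ^ 2 + d ^ 2 := h ▸ ⟨2 ^ r, by ring⟩
    obtain ⟨a, rfl⟩ := two_dvd_of_eight_dvd_sum_four_sq h8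
    obtain ⟨b, rfl⟩ := two_dvd_of_eight_dvd_sum_four_sq (a := b) (b := 2 * a) (c := c) (d := d)
      (by convert h8 using 1; ring)
    obtain ⟨c, rfl⟩ := two_dvd_of_eight_dvd_sum_four_sq (a := c) (b := 2 * a) (c := 2 * b) (d := d)
      (by convert h8 using 1; ring)
    obtain ⟨d, rfl⟩ := two_dvd_of_eight_dvd_sum_four_sq (a := d) (b := 2 * a) (c := 2 * b)
      (d := 2 * c) (by convert h8 using 1; ring)
    have h' : a ^ 2 + b ^ 2 + c ^ 2 + d ^ 2 = 2 ^ (r + 1) := by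
      have : (4 : ℤ) * (a ^ 2 + b ^ 2 + c ^ 2 + d ^ 2) = 4 * 2 ^ (r + 1) := by
        linear_combination h
      exact mul_left_cancel₀ four_ne_zero this
    obtain ⟨s, hs, habs⟩ := ih (r + 1) (by omega) (right_ne_zero_of_mul ha)
      (right_ne_zero_of_mul hb) (right_ne_zero_of_mul hc) (right_ne_zero_of_mul hd) h'
    exact ⟨s + 1, by omega, by rw [abs_mul, habs, abs_two, pow_succ, mul_comm]⟩

theorem orderOf_natCast_zmod_pos {a n : ℕ} [NeZero n] (h : a.Coprime n) :
    0 < orderOf (a : ZMod n) := by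
  rw [← ZMod.coe_unitOfCoprime a h, orderOf_units]
  exact orderOf_pos _

theorem exists_mul_add_sq_eq_two_pow {k r : ℕ} (hr : orderOf (2 : ZMod (2 * k + 1)) ∣ r)
    (hle : 4 * k ^ 2 ≤ 2 ^ r) : ∃ N, (2 * k + 1) * N + 4 * k ^ 2 = 2 ^ r := by
  have hq : ((2 * k + 1 : ℕ) : ZMod (2 * k + 1)) = 0 := ZMod.natCast_self _
  have hmod : 4 * k ^ 2 ≡ 2 ^ r [MOD 2 * k + 1] := by
    rw [← ZMod.natCast_eq_natCast_iff]
    push_cast at hq ⊢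
    rw [orderOf_dvd_iff_pow_eq_one.mp hr]
    linear_combination (2 * (k : ZMod (2 * k + 1)) - 1) * hq
  obtain ⟨N, hN⟩ := (Nat.modEq_iff_dvd' hle).mp hmod
  exact ⟨N, by omega⟩

theorem two_mul_orderOf_dvd_of_eq_sum_four_polygonalM4 {k N r x₁ x₂ x₃ x₄ : ℕ} (hk : 0 < k)
    (hN : 0 < N) (hpow : (2 * k + 1) * N + 4 * k ^ 2 = 2 ^ r)
    (hrep : N = polygonalM4 (4 * k) x₁ + polygonalM4 (4 * k) x₂ + polygonalM4 (4 * k) x₃ +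
      polygonalM4 (4 * k) x₄) :
    2 * orderOf (2 : ZMod (2 * k + 1)) ∣ r := by
  set z : ℕ → ℤ := fun x => (2 * k + 1) * x - k with hz
  have hz0 (x : ℕ) : z x ≠ 0 := by
    intro h
    have hx : (2 * k + 1) * x = k := by simp only [hz] at h; exact_mod_cast sub_eq_zero.mp h
    have := Nat.eq_zero_of_dvd_of_lt ⟨x, hx.symm⟩ (by omega : k < 2 * k + 1)
    omega
  have hsum : z x₁ ^ 2 + z x₂ ^ 2 + z x₃ ^ 2 + z x₄ ^ 2 = 2 ^ r := by
    simp only [hz, sq_mul_sub_eq_polygonalM4_four_mul]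
    have := congrArg (Nat.cast : ℕ → ℤ) hpow
    rw [hrep] at this
    push_cast at this
    linear_combination this
  obtain ⟨s, rfl, habs⟩ := abs_eq_two_pow_of_sum_four_sq_eq_two_pow (hz0 x₁) (hz0 x₂) (hz0 x₃)
    (hz0 x₄) hsum
  have hks : k < 2 ^ s := by
    have : (2 * k) ^ 2 < (2 * 2 ^ s) ^ 2 := by
      calc (2 * k) ^ 2 < (2 * k + 1) * N + 4 * k ^ 2 := by nlinarith
        _ = (2 * 2 ^ s) ^ 2 := by rw [hpow]; ring
    have := lt_of_pow_lt_pow_left₀ 2 (by positivity) this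
    omega
  have hx : ((2 * k + 1) * x₁ : ℤ) = 2 ^ s + k := by
    rcases (abs_eq (by positivity)).mp habs with h | h
    · simp only [hz] at h; linarith
    · have : (0 : ℤ) ≤ (2 * k + 1) * x₁ := by positivity
      have : ((k : ℕ) : ℤ) < 2 ^ s := by exact_mod_cast hks
      simp only [hz] at h; linarith
  have hq : ((2 * k + 1 : ℕ) : ZMod (2 * k + 1)) = 0 := ZMod.natCast_self _
  have hx' := congrArg (Int.cast : ℤ → ZMod (2 * k + 1)) hx
  push_cast at hq hx'
  have h2 : (2 : ZMod (2 * k + 1)) ^ (s + 1) = 1 := by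
    linear_combination (2 * (x₁ : ZMod (2 * k + 1)) - 1) * hq - 2 * hx'
  rw [show 2 * s + 2 = 2 * (s + 1) by ring]
  exact mul_dvd_mul_left 2 (orderOf_dvd_of_pow_eq_one h2)

theorem infinitely_many_not_sum_four_polygonal (m : ℕ) (hm : 0 < m) (h4 : 4 ∣ m) :
    {N : ℕ | 0 < N ∧ ¬ ∃ x₁ x₂ x₃ x₄ : ℕ,
      N = polygonalM4 m x₁ + polygonalM4 m x₂ + polygonalM4 m x₃ + polygonalM4 m x₄}.Infinite := by
  obtain ⟨k, rfl⟩ := h4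
  have hk : 0 < k := by omega
  set d := orderOf (2 : ZMod (2 * k + 1))
  have hd : 0 < d := by
    simpa only [Nat.cast_ofNat] using orderOf_natCast_zmod_pos (a := 2) (n := 2 * k + 1)
      (Nat.coprime_two_left.mpr (odd_two_mul_add_one k))
  refine Set.infinite_of_forall_exists_gt fun B => ?_
  set j := (2 * k + 1) * B + 4 * k ^ 2 with hj
  have hr : j < 2 ^ (d * (2 * j + 1)) :=
    Nat.lt_two_pow_self.trans_le (Nat.pow_le_pow_right two_pos (by nlinarith))
  obtain ⟨N, hN⟩ := exists_mul_add_sq_eq_two_pow (dvd_mul_right d (2 * j + 1)) (by omega)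
  have hBN : B < N := Nat.lt_of_mul_lt_mul_left (a := 2 * k + 1) (by omega)
  refine ⟨N, ⟨by omega, ?_⟩, hBN⟩
  rintro ⟨x₁, x₂, x₃, x₄, hrep⟩
  have h2d := two_mul_orderOf_dvd_of_eq_sum_four_polygonalM4 hk (by omega) hN hrep
  rw [mul_comm d] at h2d
  have := Nat.dvd_of_mul_dvd_mul_right hd h2d
  omega
end

section
/- Let m ≥ 3 be an integer with m ≡ 2 (mod 4). Then there are infinitely many positive integers N that cannot be written as N = p_{m+2}(x₁) + p_{m+2}(x₂) + 2·p_{m+2}(x₃) + 2·p_{m+2}(x₄) with x₁, x₂, x₃, x₄ nonnegative integers. -/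
/-!
Write `m = 2k` with `k = 2j + 1`. Then `k · p(x) + j² = (kx - j)²`, so `N` is a sum of the
required shape exactly when `kN + 6j²` is represented by `a² + b² + 2c² + 2d²` with every entry
of the form `kx - j`, `x ≥ 0`. A value of this form divisible by `16` has all entries even, so a
representation of `4^(e+1) u` is `2^e` times a representation of `4u`. If `2^e ≡ 1 (mod k)` and
`2^e > j`, the reduced entries are nonnegative and `≡ -j ≡ j + 1 (mod k)`, hence at least `j + 1`,
which forces `4u ≥ 6(j+1)²`. Taking `4u ≡ 6j² (mod k)` below that bound and `e` a multiple of
`φ(k)` yields infinitely many `N` with `kN + 6j² = 4^(e+1) u`, none of them represented.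
-/

def form1122 (a b c d : ℤ) : ℤ := a ^ 2 + b ^ 2 + 2 * c ^ 2 + 2 * d ^ 2

lemma sq_emod_by_parity (x : ℤ) :
    (x % 2 = 0 ∧ x ^ 2 % 4 = 0) ∨ (x % 2 = 1 ∧ x ^ 2 % 8 = 1) := by
  rcases Int.even_or_odd' x with ⟨n, rfl | rfl⟩
  · left
    have : (2 * n) ^ 2 = 4 * n ^ 2 := by ring
    omega
  · right
    obtain ⟨c, hc⟩ := Int.even_mul_succ_self n
    have : (2 * n + 1) ^ 2 = 4 * (n * (n + 1)) + 1 := by ring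
    omega

lemma two_dvd_of_eight_dvd_form1122 {a b c d : ℤ} (h : 8 ∣ form1122 a b c d) :
    2 ∣ a ∧ 2 ∣ b := by
  unfold form1122 at h
  rcases sq_emod_by_parity a with ha | ha <;> rcases sq_emod_by_parity b with hb | hb <;>
    rcases sq_emod_by_parity c with hc | hc <;> rcases sq_emod_by_parity d with hd | hd <;>
    omega

lemma two_dvd_of_sixteen_dvd_form1122 {a b c d : ℤ} (h : 16 ∣ form1122 a b c d) :
    2 ∣ a ∧ 2 ∣ b ∧ 2 ∣ c ∧ 2 ∣ d := by
  obtain ⟨⟨a', rfl⟩, ⟨b', rfl⟩⟩ := two_dvd_of_eight_dvd_form1122 (dvd_trans (by norm_num) h)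
  have hform : form1122 (2 * a') (2 * b') c d = 2 * form1122 c d a' b' := by
    unfold form1122; ring
  have h' : 8 ∣ form1122 c d a' b' := by omega
  exact ⟨dvd_mul_right 2 a', dvd_mul_right 2 b', two_dvd_of_eight_dvd_form1122 h'⟩

lemma exists_two_pow_mul_of_form1122_eq_four_pow_mul (e : ℕ) {a b c d u : ℤ}
    (h : form1122 a b c d = 4 ^ (e + 1) * u) :
    ∃ a' b' c' d' : ℤ, a = 2 ^ e * a' ∧ b = 2 ^ e * b' ∧ c = 2 ^ e * c' ∧ d = 2 ^ e * d' ∧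
      form1122 a' b' c' d' = 4 * u := by
  induction e generalizing a b c d with
  | zero => exact ⟨a, b, c, d, by simpa using h⟩
  | succ e ih =>
    obtain ⟨⟨a₁, rfl⟩, ⟨b₁, rfl⟩, ⟨c₁, rfl⟩, ⟨d₁, rfl⟩⟩ :=
      two_dvd_of_sixteen_dvd_form1122 ⟨4 ^ e * u, by rw [h]; ring⟩
    have h₁ : form1122 a₁ b₁ c₁ d₁ = 4 ^ (e + 1) * u :=
      mul_left_cancel₀ (four_ne_zero (α := ℤ)) (by unfold form1122 at h ⊢; linear_combination h)
    obtain ⟨a', b', c', d', rfl, rfl, rfl, rfl, h'⟩ := ih h₁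
    exact ⟨a', b', c', d', by ring, by ring, by ring, by ring, h'⟩

lemma succ_le_of_two_pow_mul_eq_mul_sub {k j e x : ℕ} {a : ℤ} (hk : k = 2 * j + 1) (hj : 0 < j)
    (he : 2 ^ e ≡ 1 [MOD k]) (hje : j < 2 ^ e) (h : 2 ^ e * a = k * x - j) :
    (j : ℤ) + 1 ≤ a := by
  have hje' : (j : ℤ) < 2 ^ e := by exact_mod_cast hje
  have ha : 0 ≤ a := by
    by_contra! ha
    nlinarith [mul_le_mul_of_nonneg_left (show a ≤ -1 by omega) (by positivity : (0 : ℤ) ≤ 2 ^ e)]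
  have he' : (2 : ℤ) ^ e ≡ 1 [ZMOD k] := by exact_mod_cast Int.natCast_modEq_iff.mpr he
  have hmod : a ≡ j + 1 [ZMOD k] :=
    calc a = 1 * a := (one_mul a).symm
      _ ≡ 2 ^ e * a [ZMOD k] := he'.symm.mul_right a
      _ = k * x - j := h
      _ ≡ j + 1 [ZMOD k] := Int.modEq_iff_dvd.mpr ⟨1 - x, by rw [hk]; push_cast; ring⟩
  obtain ⟨t, ht⟩ := Int.modEq_iff_dvd.mp hmod
  have hk' : (k : ℤ) = 2 * j + 1 := by exact_mod_cast hk
  have hj' : (1 : ℤ) ≤ j := by exact_mod_cast hj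
  rcases le_or_gt t 0 with ht0 | ht0 <;> nlinarith

lemma polygonal_two_mul (k n : ℕ) : polygonal (2 * k) n = k * (n * (n - 1)) + n := by
  simp [polygonal, mul_assoc]

lemma sub_sq_eq_mul_polygonal_add {k j : ℕ} (hk : k = 2 * j + 1) (n : ℕ) :
    ((k : ℤ) * n - j) ^ 2 = k * polygonal (2 * k) n + j ^ 2 := by
  rw [polygonal_two_mul]
  subst hk
  cases n <;> push_cast <;> ring

lemma form1122_ne_four_pow_mul {k j e u : ℕ} (hk : k = 2 * j + 1) (hj : 0 < j)
    (he : 2 ^ e ≡ 1 [MOD k]) (hje : j < 2 ^ e) (hu : 4 * u < 6 * (j + 1) ^ 2)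
    (x₁ x₂ x₃ x₄ : ℕ) :
    form1122 (k * x₁ - j) (k * x₂ - j) (k * x₃ - j) (k * x₄ - j) ≠ 4 ^ (e + 1) * u := by
  intro h
  obtain ⟨a, b, c, d, ha, hb, hc, hd, h'⟩ := exists_two_pow_mul_of_form1122_eq_four_pow_mul e h
  have ha' := succ_le_of_two_pow_mul_eq_mul_sub hk hj he hje ha.symm
  have hb' := succ_le_of_two_pow_mul_eq_mul_sub hk hj he hje hb.symm
  have hc' := succ_le_of_two_pow_mul_eq_mul_sub hk hj he hje hc.symm
  have hd' := succ_le_of_two_pow_mul_eq_mul_sub hk hj he hje hd.symm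
  have hu' : 4 * (u : ℤ) < 6 * (j + 1) ^ 2 := by exact_mod_cast hu
  unfold form1122 at h'
  nlinarith [mul_le_mul ha' ha' (by positivity) (by linarith),
    mul_le_mul hb' hb' (by positivity) (by linarith),
    mul_le_mul hc' hc' (by positivity) (by linarith),
    mul_le_mul hd' hd' (by positivity) (by linarith)]

lemma not_exists_polygonal_sum_eq {k j e u N : ℕ} (hk : k = 2 * j + 1) (hj : 0 < j)
    (he : 2 ^ e ≡ 1 [MOD k]) (hje : j < 2 ^ e) (hu : 4 * u < 6 * (j + 1) ^ 2)
    (hN : k * N + 6 * j ^ 2 = 4 ^ (e + 1) * u) :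
    ¬ ∃ x₁ x₂ x₃ x₄ : ℕ, N = polygonal (2 * k) x₁ + polygonal (2 * k) x₂
      + 2 * polygonal (2 * k) x₃ + 2 * polygonal (2 * k) x₄ := by
  rintro ⟨x₁, x₂, x₃, x₄, rfl⟩
  apply form1122_ne_four_pow_mul hk hj he hje hu x₁ x₂ x₃ x₄
  simp only [form1122, sub_sq_eq_mul_polygonal_add hk]
  rw [← Nat.cast_inj (R := ℤ)] at hN
  push_cast at hN
  linear_combination hN

lemma exists_four_mul_eq_six_mul_sq_add (j : ℕ) :
    ∃ u r, 4 * u = 6 * j ^ 2 + (2 * j + 1) * r ∧ 4 * u < 6 * (j + 1) ^ 2 := by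
  rcases Nat.even_or_odd' j with ⟨i, rfl | rfl⟩
  · exact ⟨6 * i ^ 2, 0, by ring, by ring_nf; omega⟩
  · exact ⟨6 * i ^ 2 + 8 * i + 3, 2, by ring, by ring_nf; omega⟩

lemma exists_mul_add_eq_mul {k a b r : ℕ} (ha : a ≡ 1 [MOD k]) (ha0 : 0 < a) :
    ∃ N, k * N + b = a * (b + k * r) := by
  obtain ⟨c, hc⟩ := (Nat.modEq_iff_dvd' ha0).mp ha.symm
  obtain rfl : a = k * c + 1 := by omega
  exact ⟨c * (b + k * r) + r, by ring⟩

theorem infinitely_many_not_sum_polygonal_1122 (m : ℕ) (hm : 3 ≤ m) (hmod : m % 4 = 2) :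
    {N : ℕ | 0 < N ∧ ¬ ∃ x₁ x₂ x₃ x₄ : ℕ,
      N = polygonal m x₁ + polygonal m x₂ + 2 * polygonal m x₃ + 2 * polygonal m x₄}.Infinite := by
  obtain ⟨j, hj, rfl⟩ : ∃ j, 0 < j ∧ m = 2 * (2 * j + 1) := ⟨m / 4, by omega, by omega⟩
  obtain ⟨u, r, hur, hu⟩ := exists_four_mul_eq_six_mul_sq_add j
  set k := 2 * j + 1 with hk
  have hφ : 0 < Nat.totient k := Nat.totient_pos.mpr (by omega)
  set e : ℕ → ℕ := fun s => Nat.totient k * (s + j)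
  have he : ∀ s, 2 ^ e s ≡ 1 [MOD k] := fun s => by
    simpa [e, pow_mul] using
      (Nat.ModEq.pow_totient (Nat.coprime_two_left.mpr (odd_two_mul_add_one j))).pow (s + j)
  have hje : ∀ s, j < 2 ^ e s := fun s =>
    Nat.lt_two_pow_self.trans_le <| Nat.pow_le_pow_right two_pos <|
      le_mul_of_one_le_of_le hφ (Nat.le_add_left j s)
  have hN : ∀ s, ∃ N, k * N + 6 * j ^ 2 = 4 ^ (e s + 1) * u := fun s => by
    have h4 : 4 ^ e s ≡ 1 [MOD k] := by simpa [← pow_mul, pow_mul'] using (he s).pow 2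
    obtain ⟨N, hN⟩ := exists_mul_add_eq_mul (b := 6 * j ^ 2) (r := r) h4 (by positivity)
    exact ⟨N, by rw [hN, ← hur]; ring⟩
  choose N hN using hN
  refine Set.infinite_of_injective_forall_mem (f := N) (fun s t hst => ?_) (fun s => ?_)
  · have h : 4 ^ (e s + 1) * u = 4 ^ (e t + 1) * u := by rw [← hN, ← hN, hst]
    have hest : e s = e t := by
      simpa using Nat.pow_right_injective le_add_self (Nat.eq_of_mul_eq_mul_right (by nlinarith) h)
    simpa [e, hφ] using hest
  · have hnot := not_exists_polygonal_sum_eq hk.symm hj (he s) (hje s) hu (hN s)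
    exact ⟨Nat.pos_of_ne_zero fun h => hnot ⟨0, 0, 0, 0, by simp [h, polygonal]⟩, hnot⟩
end
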